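/- Let w ∈ A_1 and let M be the Hardy–Littlewood maximal operator. Suppose ψ₁ and ψ₂ are positive functions on ℝⁿ × (0,∞) for which there is a constant C > 0, independent of a and r, with sup_{r<t<∞} ψ₁(a,t) ≤ C·ψ₂(a,r) for every (a,r) ∈ ℝⁿ × (0,∞). Then M is bounded from M^{1,w}_{ψ₁} to WM^{1,w}_{ψ₂}: there is C' > 0 such that ‖Mf‖_{WM^{1,w}_{ψ₂}} ≤ C'·‖f‖_{M^{1,w}_{ψ₁}} for every f ∈ M^{1,w}_{ψ₁}. -/

import Mathlib

open MeasureTheory Metric Set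
open scoped ENNReal

noncomputable section

/-- The weighted measure of a set: `w(E) = ∫_E w(x) dx`, valued in `ℝ≥0∞`. -/
def wSet {n : ℕ} (w : EuclideanSpace ℝ (Fin n) → ℝ)
    (E : Set (EuclideanSpace ℝ (Fin n))) : ℝ≥0∞ :=
  ∫⁻ x in E, ENNReal.ofReal (w x)

/-- The weighted Lebesgue norm `‖f‖_{L^{p,w}(Ω)} = (∫_Ω |f(x)|^p w(x) dx)^{1/p}`. -/
def wLp {n : ℕ} (p : ℝ) (w f : EuclideanSpace ℝ (Fin n) → ℝ)
    (Ω : Set (EuclideanSpace ℝ (Fin n))) : ℝ≥0∞ :=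
  (∫⁻ x in Ω, ENNReal.ofReal |f x| ^ p * ENNReal.ofReal (w x)) ^ (1 / p)

/-- The weighted Lebesgue norm for an `ℝ≥0∞`-valued function. -/
def wLpE {n : ℕ} (p : ℝ) (w : EuclideanSpace ℝ (Fin n) → ℝ)
    (g : EuclideanSpace ℝ (Fin n) → ℝ≥0∞) (Ω : Set (EuclideanSpace ℝ (Fin n))) : ℝ≥0∞ :=
  (∫⁻ x in Ω, g x ^ p * ENNReal.ofReal (w x)) ^ (1 / p)

/-- The weak weighted Lebesgue norm `‖f‖_{WL^{p,w}(Ω)} = sup_{γ>0} γ·w({x ∈ Ω : |f(x)| > γ})^{1/p}`. -/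
def wWeakLp {n : ℕ} (p : ℝ) (w f : EuclideanSpace ℝ (Fin n) → ℝ)
    (Ω : Set (EuclideanSpace ℝ (Fin n))) : ℝ≥0∞ :=
  ⨆ γ : Set.Ioi (0 : ℝ),
    ENNReal.ofReal γ.1 * (wSet w {x | x ∈ Ω ∧ γ.1 < |f x|}) ^ (1 / p)

/-- The weak weighted Lebesgue norm for an `ℝ≥0∞`-valued function. -/
def wWeakLpE {n : ℕ} (p : ℝ) (w : EuclideanSpace ℝ (Fin n) → ℝ)
    (g : EuclideanSpace ℝ (Fin n) → ℝ≥0∞) (Ω : Set (EuclideanSpace ℝ (Fin n))) : ℝ≥0∞ :=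
  ⨆ γ : Set.Ioi (0 : ℝ),
    ENNReal.ofReal γ.1 * (wSet w {x | x ∈ Ω ∧ ENNReal.ofReal γ.1 < g x}) ^ (1 / p)

/-- `f ∈ L^{p,w}_loc`: `f` is measurable and `‖f‖_{L^{p,w}(B)} < ∞` on every ball. -/
def MemLocWLp {n : ℕ} (p : ℝ) (w f : EuclideanSpace ℝ (Fin n) → ℝ) : Prop :=
  Measurable f ∧ ∀ (a : EuclideanSpace ℝ (Fin n)) (r : ℝ), 0 < r → wLp p w f (ball a r) < ⊤

/-- A weight: nonnegative, measurable, locally integrable, positive a.e. -/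
def IsWeight {n : ℕ} (w : EuclideanSpace ℝ (Fin n) → ℝ) : Prop :=
  Measurable w ∧ (∀ x, 0 ≤ w x) ∧ LocallyIntegrable w volume ∧ ∀ᵐ x ∂volume, 0 < w x

/-- The Muckenhoupt class `A_p` for `1 < p`. -/
def MuckAp {n : ℕ} (p : ℝ) (w : EuclideanSpace ℝ (Fin n) → ℝ) : Prop :=
  ∃ C : ℝ, 0 < C ∧ ∀ (a : EuclideanSpace ℝ (Fin n)) (r : ℝ), 0 < r →
    ((volume (ball a r))⁻¹ * ∫⁻ x in ball a r, ENNReal.ofReal (w x)) *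
      ((volume (ball a r))⁻¹ *
        ∫⁻ x in ball a r, ENNReal.ofReal (w x ^ (-(1 / (p - 1))))) ^ (p - 1) ≤
      ENNReal.ofReal C

/-- The Muckenhoupt class `A_1`. -/
def MuckA1 {n : ℕ} (w : EuclideanSpace ℝ (Fin n) → ℝ) : Prop :=
  ∃ C : ℝ, 0 < C ∧ ∀ (a : EuclideanSpace ℝ (Fin n)) (r : ℝ), 0 < r →
    ((volume (ball a r))⁻¹ * ∫⁻ x in ball a r, ENNReal.ofReal (w x)) *
      essSup (fun x => ENNReal.ofReal (w x)⁻¹) (volume.restrict (ball a r)) ≤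
      ENNReal.ofReal C

/-- The class `A_{p,q}` for `1 < p`, where `p'` is the conjugate exponent of `p`. -/
def MuckApq {n : ℕ} (p q p' : ℝ) (w : EuclideanSpace ℝ (Fin n) → ℝ) : Prop :=
  ∃ C : ℝ, 0 < C ∧ ∀ (a : EuclideanSpace ℝ (Fin n)) (r : ℝ), 0 < r →
    ((volume (ball a r))⁻¹ * ∫⁻ x in ball a r, ENNReal.ofReal (w x ^ q)) ^ (1 / q) *
      ((volume (ball a r))⁻¹ * ∫⁻ x in ball a r, ENNReal.ofReal (w x ^ (-p'))) ^ (1 / p') ≤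
      ENNReal.ofReal C

/-- The class `A_{1,q}`. -/
def MuckA1q {n : ℕ} (q : ℝ) (w : EuclideanSpace ℝ (Fin n) → ℝ) : Prop :=
  ∃ C : ℝ, 0 < C ∧ ∀ (a : EuclideanSpace ℝ (Fin n)) (r : ℝ), 0 < r →
    ((volume (ball a r))⁻¹ * ∫⁻ x in ball a r, ENNReal.ofReal (w x ^ q)) ^ (1 / q) *
      essSup (fun x => ENNReal.ofReal (w x)⁻¹) (volume.restrict (ball a r)) ≤
      ENNReal.ofReal C

/-- The Hardy–Littlewood maximal operator. -/
def HLMax {n : ℕ} (f : EuclideanSpace ℝ (Fin n) → ℝ)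
    (x : EuclideanSpace ℝ (Fin n)) : ℝ≥0∞ :=
  ⨆ r : Set.Ioi (0 : ℝ), (volume (ball x r.1))⁻¹ * ∫⁻ y in ball x r.1, ENNReal.ofReal |f y|

/-- The fractional integral operator `I_α` (applied to `|f|`, valued in `ℝ≥0∞`). -/
def fracIntE {n : ℕ} (α : ℝ) (f : EuclideanSpace ℝ (Fin n) → ℝ)
    (x : EuclideanSpace ℝ (Fin n)) : ℝ≥0∞ :=
  ∫⁻ y, ENNReal.ofReal |f y| / ENNReal.ofReal (dist x y ^ ((n : ℝ) - α))

/-- The fractional maximal operator `M_α`. -/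
def fracMax {n : ℕ} (α : ℝ) (f : EuclideanSpace ℝ (Fin n) → ℝ)
    (x : EuclideanSpace ℝ (Fin n)) : ℝ≥0∞ :=
  ⨆ r : Set.Ioi (0 : ℝ),
    (volume (ball x r.1)) ^ (α / (n : ℝ) - 1) * ∫⁻ y in ball x r.1, ENNReal.ofReal |f y|

/-- The generalized weighted Morrey norm `‖f‖_{M^{p,w}_ψ}`. -/
def morreyNorm {n : ℕ} (p : ℝ) (w : EuclideanSpace ℝ (Fin n) → ℝ)
    (ψ : EuclideanSpace ℝ (Fin n) → ℝ → ℝ) (f : EuclideanSpace ℝ (Fin n) → ℝ) : ℝ≥0∞ :=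
  ⨆ (a : EuclideanSpace ℝ (Fin n)) (r : Set.Ioi (0 : ℝ)),
    (ENNReal.ofReal (ψ a r.1))⁻¹ * wSet w (ball a r.1) ^ (-(1 / p)) * wLp p w f (ball a r.1)

/-- The generalized weighted Morrey norm for an `ℝ≥0∞`-valued function. -/
def morreyNormE {n : ℕ} (p : ℝ) (w : EuclideanSpace ℝ (Fin n) → ℝ)
    (ψ : EuclideanSpace ℝ (Fin n) → ℝ → ℝ) (g : EuclideanSpace ℝ (Fin n) → ℝ≥0∞) : ℝ≥0∞ :=
  ⨆ (a : EuclideanSpace ℝ (Fin n)) (r : Set.Ioi (0 : ℝ)),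
    (ENNReal.ofReal (ψ a r.1))⁻¹ * wSet w (ball a r.1) ^ (-(1 / p)) * wLpE p w g (ball a r.1)

/-- The generalized weighted weak Morrey norm `‖f‖_{WM^{p,w}_ψ}`. -/
def morreyWeakNorm {n : ℕ} (p : ℝ) (w : EuclideanSpace ℝ (Fin n) → ℝ)
    (ψ : EuclideanSpace ℝ (Fin n) → ℝ → ℝ) (f : EuclideanSpace ℝ (Fin n) → ℝ) : ℝ≥0∞ :=
  ⨆ (a : EuclideanSpace ℝ (Fin n)) (r : Set.Ioi (0 : ℝ)),
    (ENNReal.ofReal (ψ a r.1))⁻¹ * wSet w (ball a r.1) ^ (-(1 / p)) * wWeakLp p w f (ball a r.1)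

/-- The generalized weighted weak Morrey norm for an `ℝ≥0∞`-valued function. -/
def morreyWeakNormE {n : ℕ} (p : ℝ) (w : EuclideanSpace ℝ (Fin n) → ℝ)
    (ψ : EuclideanSpace ℝ (Fin n) → ℝ → ℝ) (g : EuclideanSpace ℝ (Fin n) → ℝ≥0∞) : ℝ≥0∞ :=
  ⨆ (a : EuclideanSpace ℝ (Fin n)) (r : Set.Ioi (0 : ℝ)),
    (ENNReal.ofReal (ψ a r.1))⁻¹ * wSet w (ball a r.1) ^ (-(1 / p)) * wWeakLpE p w g (ball a r.1)

end

/-!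
Fix a ball `B = B(a,r)` and `γ > 0`. For `x ∈ B` and `ρ ≥ r` we have
`B(x,ρ) ⊆ B(a,2ρ) ⊆ B(x,3ρ)`, so the `A_1` condition, the doubling of `w` and
`ψ₁(a,2ρ) ≤ C ψ₂(a,r)` bound the average of `|f|` over `B(x,ρ)` by `Λ₁ ψ₂(a,r) ‖f‖`.
Hence either `γ ≤ Λ₁ ψ₂(a,r) ‖f‖` and the trivial bound `w({Mf > γ} ∩ B) ≤ w(B)` suffices,
or every `x ∈ B` with `Mf(x) > γ` is witnessed by a ball of radius `< r`, contained in `2B`.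
In that case the Vitali covering lemma, the doubling of `w` and the `A_1` inequality
`γ w(B') ≤ [w]_{A_1} ∫_{B'} |f| w` on the disjoint subfamily bound `γ w({Mf > γ} ∩ B)` by a
multiple of `∫_{2B} |f| w ≤ ψ₁(a,2r) w(2B) ‖f‖ ≲ ψ₂(a,r) w(B) ‖f‖`.
-/

section Weights

variable {n : ℕ} {w : EuclideanSpace ℝ (Fin n) → ℝ}

theorem wSet_eq_withDensity (w : EuclideanSpace ℝ (Fin n) → ℝ)
    (s : Set (EuclideanSpace ℝ (Fin n))) :
    wSet w s = volume.withDensity (fun x => ENNReal.ofReal (w x)) s :=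
  (withDensity_apply' _ s).symm

theorem wSet_mono {s t : Set (EuclideanSpace ℝ (Fin n))} (h : s ⊆ t) : wSet w s ≤ wSet w t :=
  lintegral_mono_set h

theorem IsWeight.wSet_ball_ne_zero (hw : IsWeight w) (a : EuclideanSpace ℝ (Fin n)) {r : ℝ}
    (hr : 0 < r) : wSet w (ball a r) ≠ 0 := by
  intro h
  have hzero : ∀ᵐ x ∂volume.restrict (ball a r), ENNReal.ofReal (w x) = 0 :=
    (lintegral_eq_zero_iff' hw.1.ennreal_ofReal.aemeasurable).1 h
  have hfalse : ∀ᵐ _ ∂volume.restrict (ball a r), False := by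
    filter_upwards [hzero, ae_restrict_of_ae hw.2.2.2] with x h0 hpos
    exact (ENNReal.ofReal_pos.2 hpos).ne' h0
  rw [Filter.eventually_false_iff_eq_bot, ae_eq_bot, Measure.restrict_eq_zero] at hfalse
  exact (measure_ball_pos volume a hr).ne' hfalse

theorem IsWeight.wSet_ball_ne_top (hw : IsWeight w) (a : EuclideanSpace ℝ (Fin n)) (r : ℝ) :
    wSet w (ball a r) ≠ ⊤ :=
  ((hw.2.2.1.integrableOn_isCompact (isCompact_closedBall a r)).mono_set
    ball_subset_closedBall).lintegral_lt_top.ne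

theorem volume_ball_mul (x : EuclideanSpace ℝ (Fin n)) {k : ℝ} (hk : 0 < k) (ρ : ℝ) :
    volume (ball x (k * ρ)) = ENNReal.ofReal (k ^ n) * volume (ball x ρ) := by
  rw [Measure.addHaar_ball_mul_of_pos _ x hk, Measure.addHaar_ball_center _ x ρ,
    finrank_euclideanSpace_fin]

end Weights

section MuckA1

variable {n : ℕ} {w : EuclideanSpace ℝ (Fin n) → ℝ} {CA : ℝ}

def MuckA1With (w : EuclideanSpace ℝ (Fin n) → ℝ) (CA : ℝ) : Prop :=
  ∀ (a : EuclideanSpace ℝ (Fin n)) (r : ℝ), 0 < r →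
    ((volume (ball a r))⁻¹ * wSet w (ball a r)) *
      essSup (fun x => ENNReal.ofReal (w x)⁻¹) (volume.restrict (ball a r)) ≤ ENNReal.ofReal CA

theorem MuckA1With.wSet_mul_setLIntegral_le (hA : MuckA1With w CA) (hw : IsWeight w)
    (a : EuclideanSpace ℝ (Fin n)) {r : ℝ} (hr : 0 < r) (g : EuclideanSpace ℝ (Fin n) → ℝ≥0∞) :
    wSet w (ball a r) * ∫⁻ x in ball a r, g x ≤
      ENNReal.ofReal CA * volume (ball a r) * ∫⁻ x in ball a r, g x * ENNReal.ofReal (w x) := by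
  set S := essSup (fun x => ENNReal.ofReal (w x)⁻¹) (volume.restrict (ball a r))
  have hWS : wSet w (ball a r) * S ≤ ENNReal.ofReal CA * volume (ball a r) := by
    have h := hA a r hr
    rwa [mul_assoc, ENNReal.inv_mul_le_iff (measure_ball_pos volume a hr).ne'
      measure_ball_lt_top.ne, mul_comm (volume _)] at h
  have hS : S ≠ ⊤ := by
    intro hS
    rw [hS, ENNReal.mul_top (hw.wSet_ball_ne_zero a hr), top_le_iff] at hWS
    exact ENNReal.mul_ne_top ENNReal.ofReal_ne_top measure_ball_lt_top.ne hWS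
  have hg : ∫⁻ x in ball a r, g x ≤ (∫⁻ x in ball a r, g x * ENNReal.ofReal (w x)) * S := by
    rw [← lintegral_mul_const' S _ hS]
    refine lintegral_mono_ae ?_
    filter_upwards [ae_restrict_of_ae hw.2.2.2,
      ENNReal.ae_le_essSup fun x => ENNReal.ofReal (w x)⁻¹] with x hpos hle
    calc g x = g x * (ENNReal.ofReal (w x) * ENNReal.ofReal (w x)⁻¹) := by
          rw [← ENNReal.ofReal_mul hpos.le, mul_inv_cancel₀ hpos.ne', ENNReal.ofReal_one, mul_one]
      _ ≤ g x * ENNReal.ofReal (w x) * S := by rw [← mul_assoc]; gcongr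
  calc wSet w (ball a r) * ∫⁻ x in ball a r, g x
      ≤ wSet w (ball a r) * ((∫⁻ x in ball a r, g x * ENNReal.ofReal (w x)) * S) := by gcongr
    _ = wSet w (ball a r) * S * ∫⁻ x in ball a r, g x * ENNReal.ofReal (w x) := by ring
    _ ≤ _ := by gcongr

theorem MuckA1With.wSet_mul_volume_le (hA : MuckA1With w CA) (hw : IsWeight w)
    {a : EuclideanSpace ℝ (Fin n)} {r : ℝ} (hr : 0 < r) {s : Set (EuclideanSpace ℝ (Fin n))}
    (hs : MeasurableSet s) (hsub : s ⊆ ball a r) :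
    wSet w (ball a r) * volume s ≤ ENNReal.ofReal CA * volume (ball a r) * wSet w s := by
  have h := hA.wSet_mul_setLIntegral_le hw a hr (s.indicator 1)
  have hvol : ∫⁻ x in ball a r, s.indicator 1 x = volume s := by
    rw [lintegral_indicator_one hs, Measure.restrict_apply hs, inter_eq_self_of_subset_left hsub]
  have hw_s : ∫⁻ x in ball a r, s.indicator 1 x * ENNReal.ofReal (w x) = wSet w s := by
    have hind : (fun x => s.indicator 1 x * ENNReal.ofReal (w x)) =
        s.indicator fun x => ENNReal.ofReal (w x) :=
      funext fun x => by by_cases hx : x ∈ s <;> simp [hx]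
    rw [hind, lintegral_indicator hs, Measure.restrict_restrict hs,
      inter_eq_self_of_subset_left hsub, wSet]
  rwa [hvol, hw_s] at h

theorem MuckA1With.wSet_ball_mul_le (hA : MuckA1With w CA) (hw : IsWeight w)
    (x : EuclideanSpace ℝ (Fin n)) {ρ k : ℝ} (hρ : 0 < ρ) (hk : 1 ≤ k) :
    wSet w (ball x (k * ρ)) ≤ ENNReal.ofReal (CA * k ^ n) * wSet w (ball x ρ) := by
  have h := hA.wSet_mul_volume_le hw (a := x) (by positivity) measurableSet_ball
    (ball_subset_ball (le_mul_of_one_le_left hρ.le hk))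
  rw [volume_ball_mul x (by linarith) ρ] at h
  refine (ENNReal.mul_le_mul_iff_left (measure_ball_pos volume x hρ).ne'
    measure_ball_lt_top.ne).1 ?_
  rw [ENNReal.ofReal_mul' (by positivity)]
  calc wSet w (ball x (k * ρ)) * volume (ball x ρ) ≤ _ := h
    _ = _ := by ring

theorem MuckA1With.mul_wSet_ball_le (hA : MuckA1With w CA) (hw : IsWeight w)
    {x : EuclideanSpace ℝ (Fin n)} {ρ : ℝ} (hρ : 0 < ρ) {c : ℝ≥0∞}
    {g : EuclideanSpace ℝ (Fin n) → ℝ≥0∞}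
    (hc : c * volume (ball x ρ) ≤ ∫⁻ y in ball x ρ, g y) :
    c * wSet w (ball x ρ) ≤ ENNReal.ofReal CA * ∫⁻ y in ball x ρ, g y * ENNReal.ofReal (w y) := by
  refine (ENNReal.mul_le_mul_iff_left (measure_ball_pos volume x hρ).ne'
    measure_ball_lt_top.ne).1 ?_
  calc c * wSet w (ball x ρ) * volume (ball x ρ)
      = wSet w (ball x ρ) * (c * volume (ball x ρ)) := by ring
    _ ≤ wSet w (ball x ρ) * ∫⁻ y in ball x ρ, g y := by gcongr
    _ ≤ ENNReal.ofReal CA * volume (ball x ρ) * ∫⁻ y in ball x ρ, g y * ENNReal.ofReal (w y) :=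
      hA.wSet_mul_setLIntegral_le hw x hρ g
    _ = _ := by ring

end MuckA1

theorem exists_countable_pairwiseDisjoint_ball_cover {α : Type*} [MetricSpace α]
    [TopologicalSpace.SeparableSpace α] (E : Set α) (ρ : α → ℝ) {R : ℝ}
    (hρ : ∀ x ∈ E, 0 < ρ x ∧ ρ x ≤ R) :
    ∃ u ⊆ E, u.Countable ∧ u.PairwiseDisjoint (fun b => ball b (ρ b)) ∧
      E ⊆ ⋃ b ∈ u, ball b (5 * ρ b) := by
  obtain ⟨u, huE, hdisj, hcover⟩ := Vitali.exists_disjoint_subfamily_covering_enlargement_closedBall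
    E id ρ R (fun x hx => (hρ x hx).2) 4 (by norm_num)
  have hdisj' : u.PairwiseDisjoint fun b => ball b (ρ b) :=
    hdisj.mono fun _ => ball_subset_closedBall
  refine ⟨u, huE, hdisj'.countable_of_isOpen (fun _ _ => isOpen_ball)
    fun b hb => nonempty_ball.2 (hρ b (huE hb)).1, hdisj', fun x hx => ?_⟩
  obtain ⟨b, hb, hsub⟩ := hcover x hx
  refine mem_biUnion hb (closedBall_subset_ball ?_ (hsub (mem_closedBall_self (hρ x hx).1.le)))
  linarith [(hρ b (huE hb)).1]

section Covering

variable {n : ℕ} {w : EuclideanSpace ℝ (Fin n) → ℝ} {CA : ℝ}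

theorem MuckA1With.mul_wSet_le_of_le_setLIntegral (hA : MuckA1With w CA) (hw : IsWeight w)
    {E U : Set (EuclideanSpace ℝ (Fin n))} {ρ : EuclideanSpace ℝ (Fin n) → ℝ} {R : ℝ}
    {c : ℝ≥0∞} {g : EuclideanSpace ℝ (Fin n) → ℝ≥0∞}
    (hρ : ∀ x ∈ E, 0 < ρ x ∧ ρ x ≤ R) (hU : ∀ x ∈ E, ball x (ρ x) ⊆ U)
    (hc : ∀ x ∈ E, c * volume (ball x (ρ x)) ≤ ∫⁻ y in ball x (ρ x), g y) :
    c * wSet w E ≤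
      ENNReal.ofReal (CA * 5 ^ n) * ENNReal.ofReal CA * ∫⁻ y in U, g y * ENNReal.ofReal (w y) := by
  obtain ⟨u, huE, hu, hdisj, hcover⟩ := exists_countable_pairwiseDisjoint_ball_cover E ρ hρ
  set μg := volume.withDensity fun y => g y * ENNReal.ofReal (w y)
  have hμg (s : Set (EuclideanSpace ℝ (Fin n))) :
      μg s = ∫⁻ y in s, g y * ENNReal.ofReal (w y) := withDensity_apply' _ s
  have hcover_w : wSet w E ≤ ∑' b : u, wSet w (ball b (5 * ρ b)) := by
    simp_rw [wSet_eq_withDensity w]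
    exact (measure_mono hcover).trans (measure_biUnion_le _ hu _)
  calc c * wSet w E ≤ ∑' b : u, c * wSet w (ball b (5 * ρ b)) := by
        rw [ENNReal.tsum_mul_left]; gcongr
    _ ≤ ∑' b : u, ENNReal.ofReal (CA * 5 ^ n) * (ENNReal.ofReal CA * μg (ball b (ρ b))) := by
        refine ENNReal.tsum_le_tsum fun b => ?_
        have hb := (hρ b (huE b.2)).1
        calc c * wSet w (ball b (5 * ρ b))
            ≤ c * (ENNReal.ofReal (CA * 5 ^ n) * wSet w (ball b (ρ b))) := by
              gcongr; exact hA.wSet_ball_mul_le hw b hb (by norm_num)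
          _ = ENNReal.ofReal (CA * 5 ^ n) * (c * wSet w (ball b (ρ b))) := by ring
          _ ≤ _ := by
            rw [hμg]; exact mul_le_mul_right (hA.mul_wSet_ball_le hw hb (hc b (huE b.2))) _
    _ = ENNReal.ofReal (CA * 5 ^ n) * ENNReal.ofReal CA * μg (⋃ b ∈ u, ball b (ρ b)) := by
        rw [measure_biUnion hu hdisj fun _ _ => measurableSet_ball, ENNReal.tsum_mul_left,
          ENNReal.tsum_mul_left, mul_assoc]
    _ ≤ _ := by
        rw [← hμg]
        gcongr
        exact iUnion₂_subset fun b hb => hU b (huE hb)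

end Covering

section Morrey

variable {n : ℕ} {w : EuclideanSpace ℝ (Fin n) → ℝ} {ψ : EuclideanSpace ℝ (Fin n) → ℝ → ℝ}

theorem setLIntegral_le_morreyNorm_one (hw : IsWeight w) (f : EuclideanSpace ℝ (Fin n) → ℝ)
    (a : EuclideanSpace ℝ (Fin n)) {t : ℝ} (ht : 0 < t) (hψ : 0 < ψ a t) :
    ∫⁻ x in ball a t, ENNReal.ofReal |f x| * ENNReal.ofReal (w x) ≤
      ENNReal.ofReal (ψ a t) * wSet w (ball a t) * morreyNorm 1 w ψ f := by
  have h : (ENNReal.ofReal (ψ a t))⁻¹ * wSet w (ball a t) ^ (-(1 / 1 : ℝ)) *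
      wLp 1 w f (ball a t) ≤ morreyNorm 1 w ψ f :=
    le_iSup₂_of_le (f := fun a (t : Ioi (0 : ℝ)) => _) a ⟨t, ht⟩ le_rfl
  simp only [wLp, div_one, ENNReal.rpow_one, ENNReal.rpow_neg_one] at h
  rwa [mul_assoc, ENNReal.inv_mul_le_iff (ENNReal.ofReal_pos.2 hψ).ne' ENNReal.ofReal_ne_top,
    ENNReal.inv_mul_le_iff (hw.wSet_ball_ne_zero a ht) (hw.wSet_ball_ne_top a t),
    ← mul_assoc, mul_comm (wSet w _)] at h

theorem morreyWeakNormE_one_le (hw : IsWeight w) (hψ : ∀ a r, 0 < r → 0 < ψ a r)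
    {g : EuclideanSpace ℝ (Fin n) → ℝ≥0∞} {K : ℝ≥0∞}
    (h : ∀ (a : EuclideanSpace ℝ (Fin n)) (r : ℝ), 0 < r → ∀ γ : ℝ, 0 < γ →
      ENNReal.ofReal γ * wSet w {x | x ∈ ball a r ∧ ENNReal.ofReal γ < g x} ≤
        K * ENNReal.ofReal (ψ a r) * wSet w (ball a r)) :
    morreyWeakNormE 1 w ψ g ≤ K := by
  refine iSup₂_le fun a ⟨r, hr⟩ => ?_
  simp only [wWeakLpE, div_one, ENNReal.rpow_one, ENNReal.rpow_neg_one]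
  rw [mul_assoc, ENNReal.inv_mul_le_iff (ENNReal.ofReal_pos.2 (hψ a r hr)).ne'
    ENNReal.ofReal_ne_top, ENNReal.inv_mul_le_iff (hw.wSet_ball_ne_zero a hr)
    (hw.wSet_ball_ne_top a r)]
  exact iSup_le fun ⟨γ, hγ⟩ => (h a r hr γ hγ).trans_eq (by ring)

end Morrey

section Maximal

variable {n : ℕ} {w : EuclideanSpace ℝ (Fin n) → ℝ} {CA : ℝ}

theorem exists_radius_of_lt_HLMax {f : EuclideanSpace ℝ (Fin n) → ℝ}
    {x : EuclideanSpace ℝ (Fin n)} {c : ℝ≥0∞} (h : c < HLMax f x) :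
    ∃ ρ, 0 < ρ ∧ c * volume (ball x ρ) ≤ ∫⁻ y in ball x ρ, ENNReal.ofReal |f y| := by
  obtain ⟨⟨ρ, hρ⟩, hlt⟩ := lt_iSup_iff.1 h
  refine ⟨ρ, hρ, ?_⟩
  rw [mul_comm, ENNReal.mul_le_iff_le_inv (measure_ball_pos volume x hρ).ne'
    measure_ball_lt_top.ne]
  exact hlt.le

theorem MuckA1With.setLIntegral_ball_le_morreyNorm (hA : MuckA1With w CA) (hw : IsWeight w)
    {ψ : EuclideanSpace ℝ (Fin n) → ℝ → ℝ} (hψ : ∀ a r, 0 < r → 0 < ψ a r)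
    (f : EuclideanSpace ℝ (Fin n) → ℝ) {x a : EuclideanSpace ℝ (Fin n)} {ρ : ℝ} (hρ : 0 < ρ)
    (hxa : dist x a < ρ) :
    ∫⁻ y in ball x ρ, ENNReal.ofReal |f y| ≤ ENNReal.ofReal CA * ENNReal.ofReal (CA * 3 ^ n) *
      ENNReal.ofReal (ψ a (2 * ρ)) * morreyNorm 1 w ψ f * volume (ball x ρ) := by
  have hinner : ball x ρ ⊆ ball a (2 * ρ) := ball_subset_ball' (by linarith)
  have houter : ball a (2 * ρ) ⊆ ball x (3 * ρ) :=
    ball_subset_ball' (by rw [dist_comm]; linarith)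
  refine (ENNReal.mul_le_mul_iff_right (hw.wSet_ball_ne_zero x hρ)
    (hw.wSet_ball_ne_top x ρ)).1 ?_
  calc wSet w (ball x ρ) * ∫⁻ y in ball x ρ, ENNReal.ofReal |f y|
      ≤ ENNReal.ofReal CA * volume (ball x ρ) *
          ∫⁻ y in ball x ρ, ENNReal.ofReal |f y| * ENNReal.ofReal (w y) :=
        hA.wSet_mul_setLIntegral_le hw x hρ _
    _ ≤ ENNReal.ofReal CA * volume (ball x ρ) *
          ∫⁻ y in ball a (2 * ρ), ENNReal.ofReal |f y| * ENNReal.ofReal (w y) := by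
        gcongr
    _ ≤ ENNReal.ofReal CA * volume (ball x ρ) *
          (ENNReal.ofReal (ψ a (2 * ρ)) * wSet w (ball a (2 * ρ)) * morreyNorm 1 w ψ f) := by
        gcongr
        exact setLIntegral_le_morreyNorm_one hw f a (by positivity) (hψ a _ (by positivity))
    _ ≤ ENNReal.ofReal CA * volume (ball x ρ) * (ENNReal.ofReal (ψ a (2 * ρ)) *
          (ENNReal.ofReal (CA * 3 ^ n) * wSet w (ball x ρ)) * morreyNorm 1 w ψ f) := by
        gcongr
        exact (wSet_mono houter).trans (hA.wSet_ball_mul_le hw x hρ (by norm_num))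
    _ = _ := by ring

end Maximal

section WeakType

variable {n : ℕ} {w : EuclideanSpace ℝ (Fin n) → ℝ} {CA : ℝ}
  {ψ₁ ψ₂ : EuclideanSpace ℝ (Fin n) → ℝ → ℝ} {K : ℝ≥0∞}
  {a : EuclideanSpace ℝ (Fin n)} {r : ℝ}

theorem MuckA1With.exists_small_radius_of_lt_HLMax (hA : MuckA1With w CA) (hw : IsWeight w)
    (hψ₁ : ∀ a r, 0 < r → 0 < ψ₁ a r)
    (hcond : ∀ t, r < t → ENNReal.ofReal (ψ₁ a t) ≤ K * ENNReal.ofReal (ψ₂ a r))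
    {f : EuclideanSpace ℝ (Fin n) → ℝ} {c : ℝ≥0∞}
    (hc : ENNReal.ofReal CA * ENNReal.ofReal (CA * 3 ^ n) * K *
      ENNReal.ofReal (ψ₂ a r) * morreyNorm 1 w ψ₁ f < c)
    {x : EuclideanSpace ℝ (Fin n)} (hx : x ∈ ball a r) (hxc : c < HLMax f x) :
    ∃ ρ, (0 < ρ ∧ ρ ≤ r) ∧ ball x ρ ⊆ ball a (2 * r) ∧
      c * volume (ball x ρ) ≤ ∫⁻ y in ball x ρ, ENNReal.ofReal |f y| := by
  obtain ⟨ρ, hρ, hρc⟩ := exists_radius_of_lt_HLMax hxc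
  have hxa : dist x a < r := hx
  have hρr : ρ < r := by
    by_contra! hrρ
    have hle : c * volume (ball x ρ) ≤ ENNReal.ofReal CA * ENNReal.ofReal (CA * 3 ^ n) *
        K * ENNReal.ofReal (ψ₂ a r) * morreyNorm 1 w ψ₁ f * volume (ball x ρ) :=
      calc c * volume (ball x ρ) ≤ ∫⁻ y in ball x ρ, ENNReal.ofReal |f y| := hρc
        _ ≤ ENNReal.ofReal CA * ENNReal.ofReal (CA * 3 ^ n) * ENNReal.ofReal (ψ₁ a (2 * ρ)) *
              morreyNorm 1 w ψ₁ f * volume (ball x ρ) :=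
            hA.setLIntegral_ball_le_morreyNorm hw hψ₁ f hρ (by linarith)
        _ ≤ ENNReal.ofReal CA * ENNReal.ofReal (CA * 3 ^ n) *
              (K * ENNReal.ofReal (ψ₂ a r)) *
              morreyNorm 1 w ψ₁ f * volume (ball x ρ) := by
            gcongr
            exact hcond _ (by linarith)
        _ = _ := by ring
    exact hc.not_ge ((ENNReal.mul_le_mul_iff_left (measure_ball_pos volume x hρ).ne'
      measure_ball_lt_top.ne).1 hle)
  exact ⟨ρ, ⟨hρ, hρr.le⟩, ball_subset_ball' (by linarith), hρc⟩

theorem MuckA1With.mul_wSet_lt_HLMax_le (hA : MuckA1With w CA) (hw : IsWeight w)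
    (hψ₁ : ∀ a r, 0 < r → 0 < ψ₁ a r)
    (hcond : ∀ t, r < t → ENNReal.ofReal (ψ₁ a t) ≤ K * ENNReal.ofReal (ψ₂ a r))
    (f : EuclideanSpace ℝ (Fin n) → ℝ)
    (hr : 0 < r) (γ : ℝ) :
    ENNReal.ofReal γ * wSet w {x | x ∈ ball a r ∧ ENNReal.ofReal γ < HLMax f x} ≤
      (ENNReal.ofReal CA * ENNReal.ofReal (CA * 3 ^ n) * K +
        ENNReal.ofReal (CA * 5 ^ n) * ENNReal.ofReal CA *
          (K * ENNReal.ofReal (CA * 2 ^ n))) *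
        ENNReal.ofReal (ψ₂ a r) * wSet w (ball a r) * morreyNorm 1 w ψ₁ f := by
  set N := morreyNorm 1 w ψ₁ f
  set Λ₁ := ENNReal.ofReal CA * ENNReal.ofReal (CA * 3 ^ n) * K
  set Λ₂ := ENNReal.ofReal (CA * 5 ^ n) * ENNReal.ofReal CA *
    (K * ENNReal.ofReal (CA * 2 ^ n))
  by_cases hγ : ENNReal.ofReal γ ≤ Λ₁ * ENNReal.ofReal (ψ₂ a r) * N
  · calc ENNReal.ofReal γ * wSet w {x | x ∈ ball a r ∧ ENNReal.ofReal γ < HLMax f x}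
        ≤ Λ₁ * ENNReal.ofReal (ψ₂ a r) * N * wSet w (ball a r) :=
          mul_le_mul' hγ (wSet_mono fun x hx => hx.1)
      _ ≤ (Λ₁ + Λ₂) * ENNReal.ofReal (ψ₂ a r) * N * wSet w (ball a r) := by
        gcongr; exact le_self_add
      _ = _ := by ring
  rw [not_le] at hγ
  choose! ρ hρ hρsub hρavg using
    fun x (hx : x ∈ {x | x ∈ ball a r ∧ ENNReal.ofReal γ < HLMax f x}) =>
      hA.exists_small_radius_of_lt_HLMax hw hψ₁ hcond hγ hx.1 hx.2
  calc ENNReal.ofReal γ * wSet w {x | x ∈ ball a r ∧ ENNReal.ofReal γ < HLMax f x}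
      ≤ ENNReal.ofReal (CA * 5 ^ n) * ENNReal.ofReal CA *
          ∫⁻ y in ball a (2 * r), ENNReal.ofReal |f y| * ENNReal.ofReal (w y) :=
        hA.mul_wSet_le_of_le_setLIntegral hw hρ hρsub hρavg
    _ ≤ ENNReal.ofReal (CA * 5 ^ n) * ENNReal.ofReal CA *
          (ENNReal.ofReal (ψ₁ a (2 * r)) * wSet w (ball a (2 * r)) * N) := by
        gcongr
        exact setLIntegral_le_morreyNorm_one hw f a (by positivity) (hψ₁ a _ (by positivity))
    _ ≤ ENNReal.ofReal (CA * 5 ^ n) * ENNReal.ofReal CA *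
          ((K * ENNReal.ofReal (ψ₂ a r)) *
            (ENNReal.ofReal (CA * 2 ^ n) * wSet w (ball a r)) * N) := by
        gcongr
        · exact hcond _ (by linarith)
        · exact hA.wSet_ball_mul_le hw a hr (by norm_num)
    _ = Λ₂ * ENNReal.ofReal (ψ₂ a r) * wSet w (ball a r) * N := by ring
    _ ≤ (Λ₁ + Λ₂) * ENNReal.ofReal (ψ₂ a r) * wSet w (ball a r) * N := by gcongr; exact le_add_self

end WeakType

/-- Let `w ∈ A_1`, and let `ψ₁, ψ₂` be positive functions on `ℝⁿ × (0,∞)`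
with `sup_{r<t<∞} ψ₁(a,t) ≤ C·ψ₂(a,r)` for all `(a,r)`. Then the Hardy–Littlewood maximal
operator is bounded from `M^{1,w}_{ψ₁}` to `WM^{1,w}_{ψ₂}`. -/
theorem statement7 {n : ℕ}
    (w : EuclideanSpace ℝ (Fin n) → ℝ) (hw : IsWeight w) (hA1 : MuckA1 w)
    (ψ₁ ψ₂ : EuclideanSpace ℝ (Fin n) → ℝ → ℝ)
    (hψ₁ : ∀ a r, 0 < r → 0 < ψ₁ a r) (hψ₂ : ∀ a r, 0 < r → 0 < ψ₂ a r)
    (C : ℝ) (hC : 0 < C)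
    (hcond : ∀ (a : EuclideanSpace ℝ (Fin n)) (r : ℝ), 0 < r →
      ∀ t, r < t → ψ₁ a t ≤ C * ψ₂ a r) :
    ∃ C' : ℝ, 0 < C' ∧ ∀ f : EuclideanSpace ℝ (Fin n) → ℝ,
      MemLocWLp 1 w f → morreyNorm 1 w ψ₁ f < ⊤ →
      morreyWeakNormE 1 w ψ₂ (HLMax f) ≤ ENNReal.ofReal C' * morreyNorm 1 w ψ₁ f := by
  obtain ⟨CA, hCA, hA⟩ := hA1
  have hA : MuckA1With w CA := hA
  have hcondE : ∀ a r, 0 < r → ∀ t, r < t →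
      ENNReal.ofReal (ψ₁ a t) ≤ ENNReal.ofReal C * ENNReal.ofReal (ψ₂ a r) := fun a r hr t ht => by
    rw [← ENNReal.ofReal_mul hC.le]
    exact ENNReal.ofReal_le_ofReal (hcond a r hr t ht)
  set Λ := ENNReal.ofReal CA * ENNReal.ofReal (CA * 3 ^ n) * ENNReal.ofReal C +
    ENNReal.ofReal (CA * 5 ^ n) * ENNReal.ofReal CA *
      (ENNReal.ofReal C * ENNReal.ofReal (CA * 2 ^ n))
  have hΛ : Λ ≠ ⊤ := by finiteness
  have hΛ0 : Λ ≠ 0 := by positivity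
  refine ⟨Λ.toReal, ENNReal.toReal_pos hΛ0 hΛ, fun f _ _ => ?_⟩
  rw [ENNReal.ofReal_toReal hΛ]
  refine morreyWeakNormE_one_le hw hψ₂ fun a r hr γ _ => ?_
  calc ENNReal.ofReal γ * wSet w {x | x ∈ ball a r ∧ ENNReal.ofReal γ < HLMax f x}
      ≤ Λ * ENNReal.ofReal (ψ₂ a r) * wSet w (ball a r) * morreyNorm 1 w ψ₁ f :=
        hA.mul_wSet_lt_HLMax_le hw hψ₁ (hcondE a r hr) f hr γ
    _ = _ := by ring
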